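/- arXiv:1307.5542 — 8 statements merged into one kernel-verified Lean document; each statement's English description precedes it below -/
import Mathlib

section
/- Let a₁,…,a_d, b be positive integers with each aᵢ coprime to b. Then b^d·S_{(a₁,…,a_d;b)}(t) = (−1)^d·(∑_{k₁,…,k_d=1}^{b−1, a₁k₁+⋯+a_dk_d ≡ −t (mod b)} k₁k₂⋯k_d − (1/b)·(b(b−1)/2)^d). -/
/-!
For a nontrivial `b`-th root of unity `ω`, differentiating the geometric series gives
`(ω - 1) ∑_{k<b} k ω^k = b`, i.e. `1 / (1 - ω) = -(1/b) ∑_{k=1}^{b-1} k ω^k`.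
Since `aᵢ` is coprime to `b`, each `ξ^{j aᵢ}` with `0 < j < b` is such a root, so the `j`-th summand
of `S(t)` expands into a sum over tuples `k ∈ [1, b-1]^d` of `(∏ kᵢ) ξ^{j(∑ aᵢkᵢ + t)}`.
Exchanging the sums over `j` and `k`, orthogonality `∑_{j=1}^{b-1} ξ^{jm} = b·[b ∣ m] - 1` leaves
the tuples satisfying the congruence, minus the full sum `(b(b-1)/2)^d`.
-/

noncomputable def xi (b : ℕ) : ℂ := Complex.exp (2 * Real.pi * Complex.I / b)

noncomputable def FDS (b : ℕ) {d : ℕ} (a : Fin d → ℕ) (s : Finset (Fin d)) (t : ℤ) : ℂ :=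
  (b : ℂ)⁻¹ * ∑ j ∈ Finset.Ico 1 b,
    xi b ^ ((j : ℤ) * t) / ∏ i ∈ s, (1 - xi b ^ ((j : ℤ) * (a i : ℤ)))

open Finset

lemma sub_one_mul_sum_range_mul_pow {R : Type*} [CommRing R] (ω : R) :
    ∀ n : ℕ, (ω - 1) * ∑ k ∈ range n, (k : R) * ω ^ k
      = ((n : R) - 1) * ω ^ n - ∑ k ∈ range n, ω ^ k + 1
  | 0 => by simp
  | n + 1 => by
    rw [sum_range_succ, sum_range_succ (ω ^ ·), mul_add, sub_one_mul_sum_range_mul_pow ω n]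
    push_cast
    ring

lemma prod_zpow_eq_zpow_sum {G ι : Type*} [CommGroupWithZero G] {ζ : G} (hζ : ζ ≠ 0)
    (s : Finset ι) (f : ι → ℤ) : ∏ i ∈ s, ζ ^ f i = ζ ^ ∑ i ∈ s, f i := by
  classical
  induction s using Finset.induction_on with
  | empty => simp
  | insert i s hi ih => rw [prod_insert hi, sum_insert hi, ih, zpow_add₀ hζ]

lemma sum_Ico_one_id (b : ℕ) : ∑ k ∈ Ico 1 b, k = b * (b - 1) / 2 := by
  rw [← sum_range_id, range_eq_Ico]
  rcases Nat.eq_zero_or_pos b with rfl | hb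
  · rfl
  · rw [sum_eq_sum_Ico_succ_bot hb, zero_add]

lemma sum_piFinset_Ico_one_prod {R ι : Type*} [CommSemiring R] [Fintype ι] [DecidableEq ι]
    (b : ℕ) : ∑ k ∈ Fintype.piFinset (fun _ : ι => Ico 1 b), ∏ i, (k i : R)
      = ((b * (b - 1) / 2 : ℕ) : R) ^ Fintype.card ι := by
  rw [← prod_univ_sum, prod_const, card_univ, ← sum_Ico_one_id, Nat.cast_sum]

section RootsOfUnity

variable {K : Type*} [Field K]

lemma inv_one_sub_eq_sum_Ico {ω : K} {b : ℕ} (hb : (b : K) ≠ 0) (hωb : ω ^ b = 1)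
    (hω : ω ≠ 1) : (1 - ω)⁻¹ = -(b : K)⁻¹ * ∑ k ∈ Ico 1 b, (k : K) * ω ^ k := by
  have hb0 : 0 < b := Nat.pos_of_ne_zero (by rintro rfl; simp at hb)
  have hgeom : ∑ k ∈ range b, ω ^ k = 0 := by rw [geom_sum_eq hω, hωb, sub_self, zero_div]
  have key := sub_one_mul_sum_range_mul_pow ω b
  rw [hωb, hgeom, sum_range_eq_add_Ico _ hb0] at key
  have hω' : 1 - ω ≠ 0 := sub_ne_zero.mpr hω.symm
  field_simp
  linear_combination -key

theorem IsPrimitiveRoot.sum_Ico_zpow_mul {ζ : K} {b : ℕ} (hζ : IsPrimitiveRoot ζ b)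
    (hb : 0 < b) (m : ℤ) :
    ∑ j ∈ Ico 1 b, ζ ^ ((j : ℤ) * m) = (if (b : ℤ) ∣ m then (b : K) else 0) - 1 := by
  have hpow : ∀ j : ℕ, ζ ^ ((j : ℤ) * m) = (ζ ^ m) ^ j := fun j => by
    rw [mul_comm, zpow_mul, zpow_natCast]
  suffices ∑ j ∈ range b, (ζ ^ m) ^ j = if (b : ℤ) ∣ m then (b : K) else 0 by
    rw [sum_range_eq_add_Ico _ hb] at this
    simp only [hpow, pow_zero] at this ⊢
    linear_combination this
  split_ifs with hdvd
  · simp [(hζ.zpow_eq_one_iff_dvd m).mpr hdvd]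
  · have hroot : (ζ ^ m) ^ b = 1 := by
      rw [← zpow_natCast, ← zpow_mul, mul_comm, zpow_mul, hζ.zpow_eq_one, one_zpow]
    rw [geom_sum_eq (mt (hζ.zpow_eq_one_iff_dvd m).mp hdvd), hroot, sub_self, zero_div]

theorem IsPrimitiveRoot.sum_Ico_sum_mul_zpow {α : Type*} {ζ : K} {b : ℕ}
    (hζ : IsPrimitiveRoot ζ b) (hb : 0 < b) (s : Finset α) (w : α → K) (m : α → ℤ) :
    ∑ j ∈ Ico 1 b, ∑ x ∈ s, w x * ζ ^ ((j : ℤ) * m x)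
      = b * ∑ x ∈ s with (b : ℤ) ∣ m x, w x - ∑ x ∈ s, w x := by
  rw [sum_comm, sum_filter, mul_sum, ← sum_sub_distrib]
  refine sum_congr rfl fun x _ => ?_
  rw [← mul_sum, hζ.sum_Ico_zpow_mul hb]
  split_ifs <;> ring

theorem IsPrimitiveRoot.zpow_mul_ne_one {ζ : K} {b j a : ℕ} (hζ : IsPrimitiveRoot ζ b)
    (hj : j ∈ Ico 1 b) (ha : a.Coprime b) : ζ ^ ((j : ℤ) * a) ≠ 1 := by
  rw [mem_Ico] at hj
  rw [ne_eq, hζ.zpow_eq_one_iff_dvd, ← Nat.cast_mul, Int.natCast_dvd_natCast]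
  intro hdvd
  have := Nat.eq_zero_of_dvd_of_lt (ha.symm.dvd_of_dvd_mul_right hdvd) hj.2
  omega

lemma zpow_div_prod_one_sub_zpow {ι : Type*} [Fintype ι] [DecidableEq ι] {ζ : K} {b : ℕ}
    (hb : (b : K) ≠ 0) (hζ : ζ ^ b = 1) (a : ι → ℤ) (j t : ℤ) (hj : ∀ i, ζ ^ (j * a i) ≠ 1) :
    ζ ^ (j * t) / ∏ i, (1 - ζ ^ (j * a i))
      = (-(b : K)⁻¹) ^ Fintype.card ι * ∑ k ∈ Fintype.piFinset fun _ : ι => Ico 1 b,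
          (∏ i, (k i : K)) * ζ ^ (j * (∑ i, a i * k i + t)) := by
  have hζ0 : ζ ≠ 0 := (IsUnit.of_pow_eq_one hζ (by rintro rfl; simp at hb)).ne_zero
  have hroot : ∀ i, (ζ ^ (j * a i)) ^ b = 1 := fun i => by
    rw [← zpow_natCast, ← zpow_mul, mul_comm, zpow_mul, zpow_natCast, hζ, one_zpow]
  have hterm : ∀ k : ι → ℕ, ζ ^ (j * t) * ∏ i, ((k i : K) * (ζ ^ (j * a i)) ^ k i)
      = (∏ i, (k i : K)) * ζ ^ (j * (∑ i, a i * k i + t)) := fun k => by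
    simp only [prod_mul_distrib, ← zpow_natCast, ← zpow_mul, prod_zpow_eq_zpow_sum hζ0]
    rw [mul_left_comm, ← zpow_add₀ hζ0, mul_add, mul_sum]
    simp only [mul_assoc, add_comm]
  rw [div_eq_mul_inv, ← prod_inv_distrib,
    prod_congr rfl fun i _ => inv_one_sub_eq_sum_Ico hb (hroot i) (hj i),
    prod_mul_distrib, prod_const, card_univ, prod_univ_sum, mul_left_comm, mul_sum]
  exact congrArg _ (sum_congr rfl fun k _ => hterm k)

end RootsOfUnity

theorem stmt3_general (d b : ℕ) (hb : 0 < b) (a : Fin d → ℕ)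
    (hcop : ∀ i, Nat.Coprime (a i) b) (t : ℤ) :
    (b : ℂ) ^ d * FDS b a Finset.univ t =
      (-1 : ℂ) ^ d *
        ((∑ k ∈ (Fintype.piFinset fun _ : Fin d => Finset.Ico 1 b).filter
            (fun k => (b : ℤ) ∣ (∑ i, (a i : ℤ) * (k i : ℤ)) + t),
            ∏ i, (k i : ℂ)) -
          (b : ℂ)⁻¹ * ((b * (b - 1) / 2 : ℕ) : ℂ) ^ d) := by
  have hξ : IsPrimitiveRoot (xi b) b := Complex.isPrimitiveRoot_exp b hb.ne'
  have hbC : (b : ℂ) ≠ 0 := Nat.cast_ne_zero.mpr hb.ne'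
  have hexpand := fun j (hj : j ∈ Ico 1 b) =>
    zpow_div_prod_one_sub_zpow hbC hξ.pow_eq_one (fun i => (a i : ℤ)) j t
      fun i => hξ.zpow_mul_ne_one hj (hcop i)
  rw [FDS, sum_congr rfl hexpand, ← mul_sum, hξ.sum_Ico_sum_mul_zpow hb,
    sum_piFinset_Ico_one_prod, Fintype.card_fin, neg_pow, inv_pow]
  field_simp

/-- `b^d·S(t) = (−1)^d·(∑' k₁⋯k_d − (1/b)(b(b−1)/2)^d)` where the primed sum is over
tuples `1 ≤ kᵢ ≤ b−1` with `a₁k₁+⋯+a_dk_d ≡ −t (mod b)`. -/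
theorem stmt3 (d b : ℕ) (hb : 0 < b) (a : Fin d → ℕ)
    (hpos : ∀ i, 0 < a i) (hcop : ∀ i, Nat.Coprime (a i) b) (t : ℤ) :
    (b : ℂ) ^ d * FDS b a Finset.univ t =
      (-1 : ℂ) ^ d *
        ((∑ k ∈ (Fintype.piFinset fun _ : Fin d => Finset.Ico 1 b).filter
            (fun k => (b : ℤ) ∣ (∑ i, (a i : ℤ) * (k i : ℤ)) + t),
            ∏ i, (k i : ℂ)) -
          (b : ℂ)⁻¹ * ((b * (b - 1) / 2 : ℕ) : ℂ) ^ d) :=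
  stmt3_general d b hb a hcop t
end

section
/- Let a and b be coprime positive integers, b ≥ 2. With S_{(a;b)}(t) = (1/b)∑_{j=1}^{b-1} ξ_b^{jt}/(1−ξ_b^{ja}), we have b·S_{(a;b)}(t) = −∑_{k=1}^{b−1} k·S_b(t+ka), where S_b(s) = 1−1/b if b | s and −1/b otherwise. -/
noncomputable def S1 (a b : ℕ) (t : ℤ) : ℂ :=
  (b : ℂ)⁻¹ * ∑ j ∈ Finset.Ico 1 b, xi b ^ ((j : ℤ) * t) / (1 - xi b ^ ((j : ℤ) * (a : ℤ)))

/-- The 0-dimensional Fourier–Dedekind sum, in closed form. -/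
noncomputable def Sb (b : ℕ) (t : ℤ) : ℂ :=
  if (b : ℤ) ∣ t then 1 - (b : ℂ)⁻¹ else -(b : ℂ)⁻¹

/-!
For a `b`-th root of unity `w ≠ 1`, differentiating the geometric series gives
`(1 - w)⁻¹ = -b⁻¹ ∑_{k=1}^{b-1} k w^k`. Apply this to `w = ξ^{ja}`, which is `≠ 1` for
`0 < j < b` because `ξ^a` is again a primitive `b`-th root of unity, and exchange the sums over
`j` and `k`; the inner sum `b⁻¹ ∑_{j=1}^{b-1} ξ^{js}` is `S_b(s)` by orthogonality of the
characters `j ↦ ξ^{js}`.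
-/

open Finset

lemma mul_sum_range_natCast_mul_pow {R : Type*} [CommRing R] (z : R) (n : ℕ) :
    (z - 1) * ∑ k ∈ range n, (k : R) * z ^ k = n * z ^ n - z * ∑ k ∈ range n, z ^ k := by
  induction n with
  | zero => simp
  | succ n ih =>
    rw [sum_range_succ, sum_range_succ, mul_add, ih]
    push_cast
    ring

section RootOfUnity

variable {K : Type*} [Field K] {n : ℕ} {z : K}

lemma sum_range_natCast_mul_pow_of_pow_eq_one (hn : z ^ n = 1) (hz : z ≠ 1) :
    ∑ k ∈ range n, (k : K) * z ^ k = n / (z - 1) := by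
  have hgeom : ∑ k ∈ range n, z ^ k = 0 := by rw [geom_sum_eq hz, hn, sub_self, zero_div]
  rw [eq_div_iff (sub_ne_zero.mpr hz), mul_comm, mul_sum_range_natCast_mul_pow, hn, hgeom]
  ring

lemma inv_one_sub_eq_of_pow_eq_one (hn : z ^ n = 1) (hz : z ≠ 1) (hn0 : (n : K) ≠ 0) :
    (1 - z)⁻¹ = -(n : K)⁻¹ * ∑ k ∈ Ico 1 n, (k : K) * z ^ k := by
  have hpos : 0 < n := Nat.pos_of_ne_zero (by rintro rfl; exact hn0 Nat.cast_zero)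
  have hIco : ∑ k ∈ Ico 1 n, (k : K) * z ^ k = ∑ k ∈ range n, (k : K) * z ^ k := by
    simp [sum_range_eq_add_Ico _ hpos]
  rw [hIco, sum_range_natCast_mul_pow_of_pow_eq_one hn hz]
  field_simp [sub_ne_zero.mpr hz, sub_ne_zero.mpr hz.symm]
  ring

lemma IsPrimitiveRoot.sum_range_zpow_pow {ζ : K} (hζ : IsPrimitiveRoot ζ n) (s : ℤ) :
    ∑ j ∈ range n, (ζ ^ s) ^ j = if (n : ℤ) ∣ s then (n : K) else 0 := by
  split_ifs with hs
  · simp [(hζ.zpow_eq_one_iff_dvd s).mpr hs]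
  · have hne : ζ ^ s ≠ 1 := fun h => hs ((hζ.zpow_eq_one_iff_dvd s).mp h)
    rw [geom_sum_eq hne, ← zpow_natCast, ← zpow_mul, mul_comm, zpow_mul, zpow_natCast,
      hζ.pow_eq_one, one_zpow, sub_self, zero_div]

end RootOfUnity

lemma isPrimitiveRoot_xi {b : ℕ} (hb : 0 < b) : IsPrimitiveRoot (xi b) b :=
  Complex.isPrimitiveRoot_exp b hb.ne'

lemma Sb_eq_inv_mul_sum {b : ℕ} (hb : 0 < b) (s : ℤ) :
    Sb b s = (b : ℂ)⁻¹ * ∑ j ∈ Ico 1 b, xi b ^ ((j : ℤ) * s) := by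
  have hsum := (isPrimitiveRoot_xi hb).sum_range_zpow_pow s
  rw [sum_range_eq_add_Ico _ hb, pow_zero, ← eq_sub_iff_add_eq'] at hsum
  simp only [mul_comm _ s, zpow_mul, zpow_natCast, hsum, Sb]
  have hbC : (b : ℂ) ≠ 0 := by exact_mod_cast hb.ne'
  split_ifs
  · field_simp
  · field_simp; ring

lemma div_one_sub_xi_zpow_eq {a b j : ℕ} (hb : 0 < b) (h : a.Coprime b) (hj : j ∈ Ico 1 b)
    (t : ℤ) :
    xi b ^ ((j : ℤ) * t) / (1 - xi b ^ ((j : ℤ) * a))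
      = -(b : ℂ)⁻¹ * ∑ k ∈ Ico 1 b, (k : ℂ) * xi b ^ ((j : ℤ) * (t + k * a)) := by
  obtain ⟨hj0, hjb⟩ := mem_Ico.mp hj
  have hξ := isPrimitiveRoot_xi hb
  have hζ := hξ.pow_of_coprime a h
  have hexp (k : ℕ) :
      xi b ^ ((j : ℤ) * (t + k * a)) = xi b ^ ((j : ℤ) * t) * ((xi b ^ a) ^ j) ^ k := by
    rw [mul_add, zpow_add₀ (hξ.ne_zero hb.ne')]
    norm_cast
    ring
  have hroot : ((xi b ^ a) ^ j) ^ b = 1 := by rw [pow_right_comm, hζ.pow_eq_one, one_pow]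
  have hbC : (b : ℂ) ≠ 0 := by exact_mod_cast hb.ne'
  rw [show xi b ^ ((j : ℤ) * a) = (xi b ^ a) ^ j by norm_cast; ring, div_eq_mul_inv,
    inv_one_sub_eq_of_pow_eq_one hroot (hζ.pow_ne_one_of_pos_of_lt (by omega) hjb) hbC,
    mul_sum, mul_sum, mul_sum]
  refine sum_congr rfl fun k _ => ?_
  rw [hexp]
  ring

theorem stmt4_general (a b : ℕ) (h : Nat.Coprime a b) (t : ℤ) :
    (b : ℂ) * S1 a b t = -∑ k ∈ Finset.Ico 1 b, (k : ℂ) * Sb b (t + k * a) := by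
  obtain rfl | hb := Nat.eq_zero_or_pos b
  · simp [S1]
  have hbC : (b : ℂ) ≠ 0 := by exact_mod_cast hb.ne'
  calc (b : ℂ) * S1 a b t
      = ∑ j ∈ Ico 1 b, xi b ^ ((j : ℤ) * t) / (1 - xi b ^ ((j : ℤ) * a)) := by
        rw [S1, mul_inv_cancel_left₀ hbC]
    _ = ∑ j ∈ Ico 1 b,
          -(b : ℂ)⁻¹ * ∑ k ∈ Ico 1 b, (k : ℂ) * xi b ^ ((j : ℤ) * (t + k * a)) :=
        sum_congr rfl fun j hj => div_one_sub_xi_zpow_eq hb h hj t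
    _ = -∑ k ∈ Ico 1 b, (k : ℂ) * Sb b (t + k * a) := by
        simp only [Sb_eq_inv_mul_sum hb, mul_sum, ← sum_neg_distrib]
        rw [sum_comm]
        exact sum_congr rfl fun k _ => sum_congr rfl fun j _ => by ring

/-- `b·S_{(a;b)}(t) = −∑_{k=1}^{b−1} k·S_b(t+ka)`. -/
theorem stmt4 (a b : ℕ) (ha : 0 < a) (hb : 2 ≤ b) (h : Nat.Coprime a b) (t : ℤ) :
    (b : ℂ) * S1 a b t = -∑ k ∈ Finset.Ico 1 b, (k : ℂ) * Sb b (t + k * a) :=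
  stmt4_general a b h t
end

section
/- Let a₁,…,a_d, b be positive integers with d ≥ 1, b ≥ 2, and each aᵢ coprime to b. Then b·S_{(a₁,…,a_d;b)}(t) = −∑_{k=1}^{b−1} k·S_{(a₁,…,a_{d−1};b)}(t + k·a_d) for all t ∈ ℤ, where the d−1 = 0 case is S_b. -/
lemma key_sum (b : ℕ) (x : ℂ) (hx : x ≠ 1) (hxb : x ^ b = 1) :
    ∑ k ∈ Finset.Ico 1 b, (k : ℂ) * x ^ k = (b : ℂ) / (x - 1) := by
  have hx1 : x - 1 ≠ 0 := sub_ne_zero.mpr hx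
  have hgeom : ∑ k ∈ Finset.range b, x ^ k = 0 := by
    rw [geom_sum_eq hx, hxb, sub_self, zero_div]
  have h0 : ∑ k ∈ Finset.Ico 1 b, (k : ℂ) * x ^ k
      = ∑ k ∈ Finset.range b, (k : ℂ) * x ^ k := by
    apply Finset.sum_subset
    · intro k hk
      rw [Finset.mem_Ico] at hk
      exact Finset.mem_range.mpr hk.2
    · intro k hk hk'
      rw [Finset.mem_range] at hk
      rw [Finset.mem_Ico] at hk'
      have : k = 0 := by omega
      simp [this]
  rw [h0, eq_div_iff hx1]
  have expand : (∑ k ∈ Finset.range b, (k : ℂ) * x ^ k) * (x - 1)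
      = (∑ k ∈ Finset.range b, (((k + 1 : ℕ) : ℂ) * x ^ (k + 1) - (k : ℂ) * x ^ k))
        - ∑ k ∈ Finset.range b, x ^ (k + 1) := by
    rw [Finset.sum_mul, ← Finset.sum_sub_distrib]
    apply Finset.sum_congr rfl
    intro k _
    push_cast
    ring
  have htel : ∑ k ∈ Finset.range b, (((k + 1 : ℕ) : ℂ) * x ^ (k + 1) - (k : ℂ) * x ^ k)
      = (b : ℂ) * x ^ b - ((0 : ℕ) : ℂ) * x ^ 0 :=
    Finset.sum_range_sub (fun k => (k : ℂ) * x ^ k) b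
  have hshift : ∑ k ∈ Finset.range b, x ^ (k + 1) = (∑ k ∈ Finset.range b, x ^ k) * x := by
    rw [Finset.sum_mul]
    apply Finset.sum_congr rfl
    intro k _
    rw [pow_succ]
  rw [expand, htel, hshift, hgeom, hxb]
  push_cast
  ring

/-- `b·S_{(a₁,…,a_d;b)}(t) = −∑_{k=1}^{b−1} k·S_{(a₁,…,a_{d−1};b)}(t + k a_d)`. -/
theorem stmt5 (d b : ℕ) (hb : 2 ≤ b) (a : Fin (d + 1) → ℕ)
    (hpos : ∀ i, 0 < a i) (hcop : ∀ i, Nat.Coprime (a i) b) (t : ℤ) :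
    (b : ℂ) * FDS b a Finset.univ t =
      -∑ k ∈ Finset.Ico 1 b,
        (k : ℂ) * FDS b a (Finset.univ.erase (Fin.last d)) (t + k * (a (Fin.last d) : ℤ)) := by
  have hb0 : (b : ℂ) ≠ 0 := Nat.cast_ne_zero.mpr (by omega)
  have hζ : IsPrimitiveRoot (xi b) b := Complex.isPrimitiveRoot_exp b (by omega)
  have hζ0 : xi b ≠ 0 := Complex.exp_ne_zero _
  have hne : ∀ j, j ∈ Finset.Ico 1 b → ∀ i : Fin (d + 1),
      xi b ^ ((j : ℤ) * (a i : ℤ)) ≠ 1 := by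
    intro j hj i h
    rw [Finset.mem_Ico] at hj
    have hcast : ((j : ℤ) * (a i : ℤ)) = ((j * a i : ℕ) : ℤ) := by push_cast; ring
    rw [hcast, zpow_natCast] at h
    have hdvd : b ∣ j * a i := (hζ.pow_eq_one_iff_dvd _).mp h
    have hdvd2 : b ∣ j := (Nat.Coprime.dvd_of_dvd_mul_right (hcop i).symm hdvd)
    have := Nat.le_of_dvd (by omega) hdvd2
    omega
  have hP : ∀ j ∈ Finset.Ico 1 b,
      (∏ i ∈ Finset.univ.erase (Fin.last d), (1 - xi b ^ ((j : ℤ) * (a i : ℤ)))) ≠ 0 := by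
    intro j hj
    rw [Finset.prod_ne_zero_iff]
    intro i _
    exact sub_ne_zero.mpr (Ne.symm (hne j hj i))
  have hxb : ∀ j : ℕ, (xi b ^ ((j : ℤ) * (a (Fin.last d) : ℤ))) ^ b = 1 := by
    intro j
    rw [← zpow_natCast (xi b ^ ((j : ℤ) * (a (Fin.last d) : ℤ))), ← zpow_mul, mul_comm,
      zpow_mul, zpow_natCast, hζ.pow_eq_one, one_zpow]
  unfold FDS
  rw [← mul_assoc, mul_inv_cancel₀ hb0, one_mul]
  have step1 : ∀ k ∈ Finset.Ico 1 b,
      (k : ℂ) * ((b : ℂ)⁻¹ * ∑ j ∈ Finset.Ico 1 b,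
        xi b ^ ((j : ℤ) * (t + (k : ℤ) * (a (Fin.last d) : ℤ))) /
          ∏ i ∈ Finset.univ.erase (Fin.last d), (1 - xi b ^ ((j : ℤ) * (a i : ℤ))))
      = (b : ℂ)⁻¹ * ∑ j ∈ Finset.Ico 1 b, (k : ℂ) *
        (xi b ^ ((j : ℤ) * (t + (k : ℤ) * (a (Fin.last d) : ℤ))) /
          ∏ i ∈ Finset.univ.erase (Fin.last d), (1 - xi b ^ ((j : ℤ) * (a i : ℤ)))) := by
    intro k _
    simp only [Finset.mul_sum]
    apply Finset.sum_congr rfl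
    intro j _
    ring
  rw [Finset.sum_congr rfl step1, ← Finset.mul_sum, Finset.sum_comm]
  have step2 : ∀ j ∈ Finset.Ico 1 b,
      ∑ k ∈ Finset.Ico 1 b, (k : ℂ) *
        (xi b ^ ((j : ℤ) * (t + (k : ℤ) * (a (Fin.last d) : ℤ))) /
          ∏ i ∈ Finset.univ.erase (Fin.last d), (1 - xi b ^ ((j : ℤ) * (a i : ℤ))))
      = (xi b ^ ((j : ℤ) * t) /
          ∏ i ∈ Finset.univ.erase (Fin.last d), (1 - xi b ^ ((j : ℤ) * (a i : ℤ)))) *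
        ((b : ℂ) / (xi b ^ ((j : ℤ) * (a (Fin.last d) : ℤ)) - 1)) := by
    intro j hj
    have hexp : ∀ k : ℕ,
        xi b ^ ((j : ℤ) * (t + (k : ℤ) * (a (Fin.last d) : ℤ)))
        = xi b ^ ((j : ℤ) * t) * (xi b ^ ((j : ℤ) * (a (Fin.last d) : ℤ))) ^ k := by
      intro k
      rw [← zpow_natCast (xi b ^ ((j : ℤ) * (a (Fin.last d) : ℤ))), ← zpow_mul, ← zpow_add₀ hζ0]
      ring_nf
    have : ∑ k ∈ Finset.Ico 1 b, (k : ℂ) *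
        (xi b ^ ((j : ℤ) * (t + (k : ℤ) * (a (Fin.last d) : ℤ))) /
          ∏ i ∈ Finset.univ.erase (Fin.last d), (1 - xi b ^ ((j : ℤ) * (a i : ℤ))))
        = (xi b ^ ((j : ℤ) * t) /
          ∏ i ∈ Finset.univ.erase (Fin.last d), (1 - xi b ^ ((j : ℤ) * (a i : ℤ)))) *
          ∑ k ∈ Finset.Ico 1 b, (k : ℂ) * (xi b ^ ((j : ℤ) * (a (Fin.last d) : ℤ))) ^ k := by
      rw [Finset.mul_sum]
      apply Finset.sum_congr rfl
      intro k _
      rw [hexp k]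
      ring
    rw [this, key_sum b _ (hne j hj (Fin.last d)) (hxb j)]
  rw [Finset.sum_congr rfl step2]
  rw [Finset.mul_sum, ← Finset.sum_neg_distrib]
  apply Finset.sum_congr rfl
  intro j hj
  have hprod : (∏ i ∈ Finset.univ, (1 - xi b ^ ((j : ℤ) * (a i : ℤ))))
      = (1 - xi b ^ ((j : ℤ) * (a (Fin.last d) : ℤ))) *
        ∏ i ∈ Finset.univ.erase (Fin.last d), (1 - xi b ^ ((j : ℤ) * (a i : ℤ))) :=
    (Finset.mul_prod_erase _ _ (Finset.mem_univ _)).symm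
  rw [hprod]
  have h1 : (1 : ℂ) - xi b ^ ((j : ℤ) * (a (Fin.last d) : ℤ)) ≠ 0 :=
    sub_ne_zero.mpr (Ne.symm (hne j hj (Fin.last d)))
  have h2 := hP j hj
  have h3 : xi b ^ ((j : ℤ) * (a (Fin.last d) : ℤ)) - 1 ≠ 0 := by
    intro h
    exact hne j hj (Fin.last d) (by linear_combination h)
  field_simp
  ring
end

section
/- Let a₁,…,a_d, b be positive integers with each aᵢ coprime to b. Then for all t ∈ ℤ: S_{(a₁,…,a_d;b)}(−t) = ∑_{k=0}^{d} (−1)^k ∑_{1≤i₁<⋯<i_k≤d} S_{(a_{i₁},…,a_{i_k};b)}(t), where the k = 0 term is S_b(t). -/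
lemma xi_prim (b : ℕ) (hb : 0 < b) : IsPrimitiveRoot (xi b) b := by
  simpa [xi] using Complex.isPrimitiveRoot_exp b hb.ne'

lemma inv_one_sub_inv {w : ℂ} (hw0 : w ≠ 0) (hw1 : w ≠ 1) :
    (1 - w⁻¹)⁻¹ = 1 - (1 - w)⁻¹ := by
  have h1 : (1 : ℂ) - w ≠ 0 := sub_ne_zero.mpr (fun h => hw1 h.symm)
  have key : (1 - (1 - w)⁻¹) * (1 - w⁻¹) = 1 := by
    field_simp
    ring
  exact inv_eq_of_mul_eq_one_left key

/-- `S_{(a₁,…,a_d;b)}(−t) = ∑_{s ⊆ {1,…,d}} (−1)^{|s|} S_{(a_i : i ∈ s;b)}(t)`. -/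
theorem stmt7 (d b : ℕ) (hb : 0 < b) (a : Fin d → ℕ)
    (hpos : ∀ i, 0 < a i) (hcop : ∀ i, Nat.Coprime (a i) b) (t : ℤ) :
    FDS b a Finset.univ (-t) =
      ∑ s ∈ (Finset.univ : Finset (Fin d)).powerset, (-1 : ℂ) ^ s.card * FDS b a s t := by
  have hprim := xi_prim b hb
  have hx0 : xi b ≠ 0 := hprim.ne_zero hb.ne'
  have hxb : xi b ^ (b : ℤ) = 1 := by
    rw [zpow_natCast]; exact hprim.pow_eq_one
  unfold FDS
  suffices h : (∑ j ∈ Finset.Ico 1 b,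
      xi b ^ ((j : ℤ) * -t) / ∏ i, (1 - xi b ^ ((j : ℤ) * (a i : ℤ)))) =
      ∑ j ∈ Finset.Ico 1 b, ∑ s ∈ (Finset.univ : Finset (Fin d)).powerset,
        (-1 : ℂ) ^ s.card * (xi b ^ ((j : ℤ) * t) / ∏ i ∈ s, (1 - xi b ^ ((j : ℤ) * (a i : ℤ)))) by
    rw [h]
    simp_rw [Finset.mul_sum]
    rw [Finset.sum_comm]
    exact Finset.sum_congr rfl fun s _ => Finset.sum_congr rfl fun j _ => by ring
  refine Finset.sum_nbij' (fun j => b - j) (fun j => b - j) ?_ ?_ ?_ ?_ ?_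
  · intro j hj; simp only [Finset.mem_Ico] at *; omega
  · intro j hj; simp only [Finset.mem_Ico] at *; omega
  · intro j hj; simp only [Finset.mem_Ico] at *; omega
  · intro j hj; simp only [Finset.mem_Ico] at *; omega
  intro j hj
  simp only [Finset.mem_Ico] at hj
  obtain ⟨hj1, hj2⟩ := hj
  -- rewrite the exponents at b - j
  have e1 : ∀ m : ℤ, xi b ^ (((b - j : ℕ) : ℤ) * m) = xi b ^ (-(j : ℤ) * m) := by
    intro m
    have hbj : ((b - j : ℕ) : ℤ) = (b : ℤ) - j := by omega
    have : ((b : ℤ) - j) * m = (b : ℤ) * m + -(j : ℤ) * m := by ring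
    rw [hbj, this, zpow_add₀ hx0, zpow_mul, hxb, one_zpow, one_mul]
  simp_rw [e1]
  -- notation
  set w : Fin d → ℂ := fun i => xi b ^ ((j : ℤ) * (a i : ℤ)) with hw
  have hw0 : ∀ i, w i ≠ 0 := fun i => zpow_ne_zero _ hx0
  have hw1 : ∀ i, w i ≠ 1 := by
    intro i hwi
    rw [hw] at hwi
    have hdvd : (b : ℤ) ∣ (j : ℤ) * (a i : ℤ) := (hprim.zpow_eq_one_iff_dvd _).mp hwi
    have : (b : ℤ) ∣ ((j * a i : ℕ) : ℤ) := by push_cast; exact hdvd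
    have hbd : b ∣ j * a i := Int.ofNat_dvd.mp this
    have : b ∣ j := (Nat.Coprime.dvd_of_dvd_mul_right (hcop i).symm hbd)
    have := Nat.le_of_dvd (by omega) this
    omega
  have hsub : ∀ i, (1 : ℂ) - w i ≠ 0 := fun i => sub_ne_zero.mpr (fun h => hw1 i h.symm)
  have hinv : ∀ i, (1 - w i)⁻¹ = 1 - (1 - (w i)⁻¹)⁻¹ := by
    intro i
    have := inv_one_sub_inv (w := (w i)⁻¹) (inv_ne_zero (hw0 i))
      (fun h => hw1 i (by rw [← inv_inv (w i), h, inv_one]))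
    rwa [inv_inv] at this
  -- exponent rewrites
  have et : xi b ^ ((j : ℤ) * -t) = xi b ^ (-(j : ℤ) * t) := by ring_nf
  have ea : ∀ i, xi b ^ (-(j : ℤ) * (a i : ℤ)) = (w i)⁻¹ := by
    intro i
    rw [hw, neg_mul, zpow_neg]
  simp_rw [et, ea]
  -- expand the product of inverses
  rw [div_eq_mul_inv, ← Finset.prod_inv_distrib]
  rw [Finset.prod_congr rfl (fun i _ => hinv i)]
  have expand : (∏ i, (1 - (1 - (w i)⁻¹)⁻¹)) =
      ∑ s ∈ (Finset.univ : Finset (Fin d)).powerset,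
        (-1 : ℂ) ^ s.card * ∏ i ∈ s, (1 - (w i)⁻¹)⁻¹ := by
    have := Finset.prod_add (fun i => -(1 - (w i)⁻¹)⁻¹) (fun _ => (1 : ℂ)) Finset.univ
    simp only [Finset.prod_const_one, mul_one, neg_add_eq_sub] at this
    rw [this]
    refine Finset.sum_congr rfl fun s _ => ?_
    rw [Finset.prod_congr rfl (fun i _ => (neg_one_mul ((1 - (w i)⁻¹)⁻¹)).symm),
      Finset.prod_mul_distrib, Finset.prod_const]
  rw [expand, Finset.mul_sum]
  refine Finset.sum_congr rfl fun s _ => ?_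
  rw [div_eq_mul_inv, ← Finset.prod_inv_distrib]
  ring
end

section
/- Let a₁,…,a_d, b be positive integers with each aᵢ coprime to b. Then for all t ∈ ℤ: S_{(a₁,…,a_d;b)}(t + a₁ + a₂ + ⋯ + a_d) = ∑_{k=0}^{d} (−1)^{d−k} ∑_{1≤i₁<⋯<i_k≤d} S_{(a_{i₁},…,a_{i_k};b)}(t), where the k = 0 term is (−1)^d S_b(t). -/
/-!
Each summand of the Fourier–Dedekind sum is `ξ^{jt} ∏ᵢ ξ^{j aᵢ}/(1 - ξ^{j aᵢ})` after the shift
by `a₁ + ⋯ + a_d`. Writing `x/(1 - x) = 1/(1 - x) - 1` and expanding the product over subsets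
gives the alternating sum; coprimality keeps every denominator `1 - ξ^{j aᵢ}` nonzero.
-/

open Finset

theorem Finset.prod_div_one_sub_eq_sum_powerset {K ι : Type*} [Field K] [DecidableEq ι]
    (u : Finset ι) (x : ι → K) (hx : ∀ i ∈ u, x i ≠ 1) :
    ∏ i ∈ u, x i / (1 - x i) = ∑ s ∈ u.powerset, (-1) ^ (#u - #s) / ∏ i ∈ s, (1 - x i) := by
  have hsplit : ∀ i ∈ u, x i / (1 - x i) = (1 - x i)⁻¹ + -1 := fun i hi => by
    have : 1 - x i ≠ 0 := sub_ne_zero.mpr (hx i hi).symm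
    field_simp
    ring
  rw [prod_congr rfl hsplit, prod_add]
  refine sum_congr rfl fun s hs => ?_
  rw [prod_const, card_sdiff_of_subset (mem_powerset.mp hs), prod_inv_distrib, div_eq_mul_inv,
    mul_comm]

theorem zpow_add_sum_div_prod_one_sub {K ι : Type*} [Field K] [Fintype ι] [DecidableEq ι]
    (z : K) (hz : z ≠ 0) (a : ι → ℕ) (ha : ∀ i, z ^ (a i : ℤ) ≠ 1) (t : ℤ) :
    z ^ (t + ∑ i, (a i : ℤ)) / ∏ i, (1 - z ^ (a i : ℤ)) =
      ∑ s ∈ univ.powerset,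
        (-1) ^ (Fintype.card ι - #s) * (z ^ t / ∏ i ∈ s, (1 - z ^ (a i : ℤ))) := by
  have hpow : z ^ (∑ i, (a i : ℤ)) = ∏ i, z ^ (a i : ℤ) := by
    simp only [← Nat.cast_sum, zpow_natCast, prod_pow_eq_pow_sum]
  rw [zpow_add₀ hz, hpow, mul_div_assoc, ← prod_div_distrib,
    prod_div_one_sub_eq_sum_powerset _ _ fun i _ => ha i, mul_sum, card_univ]
  refine sum_congr rfl fun s _ => ?_
  ring

theorem xi_zpow_mul_ne_one {b j m : ℕ} (hj : j ∈ Ico 1 b) (hm : m.Coprime b) :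
    xi b ^ ((j : ℤ) * m) ≠ 1 := by
  obtain ⟨hj1, hjb⟩ := mem_Ico.mp hj
  have hprim : IsPrimitiveRoot (xi b) b := by
    simpa [xi] using Complex.isPrimitiveRoot_exp b (by omega)
  intro h
  have hdvd : b ∣ j * m := by exact_mod_cast (hprim.zpow_eq_one_iff_dvd _).mp h
  have := Nat.le_of_dvd hj1 (hm.symm.dvd_of_dvd_mul_right hdvd)
  omega

theorem stmt8_general (d b : ℕ) (a : Fin d → ℕ)
    (hcop : ∀ i, Nat.Coprime (a i) b) (t : ℤ) :
    FDS b a Finset.univ (t + ∑ i, (a i : ℤ)) =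
      ∑ s ∈ (Finset.univ : Finset (Fin d)).powerset,
        (-1 : ℂ) ^ (d - s.card) * FDS b a s t := by
  have hterm : ∀ j ∈ Ico 1 b,
      xi b ^ ((j : ℤ) * (t + ∑ i, (a i : ℤ))) / ∏ i, (1 - xi b ^ ((j : ℤ) * (a i : ℤ))) =
        ∑ s ∈ univ.powerset, (-1) ^ (d - #s) *
          (xi b ^ ((j : ℤ) * t) / ∏ i ∈ s, (1 - xi b ^ ((j : ℤ) * (a i : ℤ)))) := fun j hj => by
    simp only [zpow_mul]
    simpa using zpow_add_sum_div_prod_one_sub (xi b ^ (j : ℤ))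
      (zpow_ne_zero _ (Complex.exp_ne_zero _)) a
      (fun i => by rw [← zpow_mul]; exact xi_zpow_mul_ne_one hj (hcop i)) t
  simp only [FDS, sum_congr rfl hterm, mul_sum]
  rw [sum_comm]
  exact sum_congr rfl fun s _ => sum_congr rfl fun j _ => by ring

/-- `S_{(a₁,…,a_d;b)}(t + a₁ + ⋯ + a_d) = ∑_{s ⊆ {1,…,d}} (−1)^{d−|s|} S_{(a_i : i ∈ s;b)}(t)`. -/
theorem stmt8 (d b : ℕ) (hb : 0 < b) (a : Fin d → ℕ)
    (hpos : ∀ i, 0 < a i) (hcop : ∀ i, Nat.Coprime (a i) b) (t : ℤ) :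
    FDS b a Finset.univ (t + ∑ i, (a i : ℤ)) =
      ∑ s ∈ (Finset.univ : Finset (Fin d)).powerset,
        (-1 : ℂ) ^ (d - s.card) * FDS b a s t :=
  stmt8_general d b a hcop t
end

section
/- Let b ≥ 3 and d ≥ 1. Then (1/φ(b))^d · ∑ over all d-tuples (m₁,…,m_d) with 1 ≤ mᵢ ≤ b−1 and gcd(mᵢ,b)=1 of S_{(m₁,…,m_d;b)}(t) equals (1/2^d)·(𝟙[b | t] − 1/b) for every t ∈ ℤ. -/
/-! Swapping the two summations, the sum over `m` of `∏ᵢ (1 - ξ^{j mᵢ})⁻¹` factors as the `d`-th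
power of `∑_{gcd(m, b) = 1} (1 - ξ^{j m})⁻¹`. Pairing `m` with `b - m` turns `ξ^{j m}` into its
inverse, and `(1 - z)⁻¹ + (1 - z⁻¹)⁻¹ = 1`, so this inner sum is `φ(b)/2` for every `0 < j < b`.
What remains is the geometric sum `∑_{0 < j < b} ξ^{j t} = b 𝟙[b ∣ t] - 1`. -/

open Finset

abbrev coprimeResidues (b : ℕ) : Finset ℕ := {m ∈ Ico 1 b | m.gcd b = 1}

lemma card_coprimeResidues {b : ℕ} (hb : b ≠ 1) : #(coprimeResidues b) = b.totient := by
  rw [Nat.totient_eq_card_coprime]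
  congr 1
  ext m
  simp only [mem_filter, mem_Ico, mem_range, Nat.coprime_comm (m := m), Nat.Coprime]
  constructor
  · rintro ⟨⟨-, hmb⟩, hm⟩
    exact ⟨hmb, hm⟩
  · rintro ⟨hmb, hm⟩
    refine ⟨⟨Nat.pos_of_ne_zero ?_, hmb⟩, hm⟩
    rintro rfl
    exact hb (by simpa using hm)

lemma sub_mem_coprimeResidues {b m : ℕ} (hm : m ∈ coprimeResidues b) :
    b - m ∈ coprimeResidues b := by
  simp only [mem_filter, mem_Ico] at hm ⊢
  obtain ⟨⟨hm1, hmb⟩, hcop⟩ := hm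
  refine ⟨⟨by omega, by omega⟩, ?_⟩
  rw [Nat.gcd_comm, Nat.gcd_self_sub_right hmb.le, Nat.gcd_comm, hcop]

lemma inv_one_sub_add_inv_one_sub_inv {K : Type*} [Field K] {z : K} (h0 : z ≠ 0) (h1 : z ≠ 1) :
    (1 - z)⁻¹ + (1 - z⁻¹)⁻¹ = 1 := by
  field_simp
  ring

namespace IsPrimitiveRoot

variable {K : Type*} [Field K] {ζ : K} {b : ℕ}

lemma sum_range_zpow_mul (hζ : IsPrimitiveRoot ζ b) (t : ℤ) :
    ∑ j ∈ range b, ζ ^ ((j : ℤ) * t) = if (b : ℤ) ∣ t then (b : K) else 0 := by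
  simp only [mul_comm _ t, zpow_mul, zpow_natCast]
  split_ifs with hdvd
  · simp [(hζ.zpow_eq_one_iff_dvd t).mpr hdvd]
  · have hz : ζ ^ t ≠ 1 := fun h => hdvd ((hζ.zpow_eq_one_iff_dvd t).mp h)
    rw [geom_sum_eq hz, ← zpow_natCast, ← zpow_mul, mul_comm, zpow_mul, zpow_natCast,
      hζ.pow_eq_one, one_zpow, sub_self, zero_div]

lemma two_mul_sum_coprimeResidues_inv_one_sub_pow (hζ : IsPrimitiveRoot ζ b) {j : ℕ}
    (hj : ¬b ∣ j) : 2 * ∑ m ∈ coprimeResidues b, (1 - ζ ^ (j * m))⁻¹ = b.totient := by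
  set f : ℕ → K := fun m => (1 - ζ ^ (j * m))⁻¹
  have hreflect : ∑ m ∈ coprimeResidues b, f (b - m) = ∑ m ∈ coprimeResidues b, f m :=
    sum_nbij' (b - ·) (b - ·) (fun _ => sub_mem_coprimeResidues) (fun _ => sub_mem_coprimeResidues)
      (fun m hm => by simp only [mem_filter, mem_Ico] at hm; omega)
      (fun m hm => by simp only [mem_filter, mem_Ico] at hm; omega) (fun _ _ => rfl)
  have hpair : ∀ m ∈ coprimeResidues b, f m + f (b - m) = 1 := by
    intro m hm
    simp only [mem_filter, mem_Ico] at hm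
    obtain ⟨⟨-, hmb⟩, hcop⟩ := hm
    have hne : ζ ^ (j * m) ≠ 1 := by
      rw [Ne, hζ.pow_eq_one_iff_dvd]
      exact fun h => hj ((Nat.Coprime.dvd_of_dvd_mul_right (by rwa [Nat.coprime_comm]) h))
    have hinv : ζ ^ (j * (b - m)) = (ζ ^ (j * m))⁻¹ := by
      refine eq_inv_of_mul_eq_one_left ?_
      rw [← pow_add, ← mul_add, Nat.sub_add_cancel hmb.le, pow_mul', hζ.pow_eq_one, one_pow]
    simp only [f, hinv]
    exact inv_one_sub_add_inv_one_sub_inv (pow_ne_zero _ (hζ.ne_zero (by omega))) hne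
  calc 2 * ∑ m ∈ coprimeResidues b, f m
      = ∑ m ∈ coprimeResidues b, (f m + f (b - m)) := by rw [sum_add_distrib, hreflect, two_mul]
    _ = b.totient := by
      rw [sum_congr rfl hpair, sum_const, nsmul_one,
        card_coprimeResidues (by rintro rfl; exact hj (one_dvd j))]

end IsPrimitiveRoot

lemma sum_piFinset_FDS_univ (b : ℕ) {d : ℕ} (S : Fin d → Finset ℕ) (t : ℤ) :
    ∑ m ∈ Fintype.piFinset S, FDS b m univ t =
      (b : ℂ)⁻¹ * ∑ j ∈ Ico 1 b,
        xi b ^ ((j : ℤ) * t) * ∏ i, ∑ m ∈ S i, (1 - xi b ^ (j * m))⁻¹ := by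
  simp only [FDS, ← mul_sum]
  rw [sum_comm]
  congr 1
  refine sum_congr rfl fun j _ => ?_
  simp only [prod_univ_sum, mul_sum, div_eq_mul_inv, ← prod_inv_distrib, ← Nat.cast_mul,
    zpow_natCast]

theorem stmt10_general (d b : ℕ) (hb : 3 ≤ b) (t : ℤ) :
    ((Nat.totient b : ℂ))⁻¹ ^ d *
        ∑ m ∈ Fintype.piFinset
            (fun _ : Fin d => (Finset.Ico 1 b).filter (fun m => Nat.gcd m b = 1)),
          FDS b m Finset.univ t =
      ((2 : ℂ) ^ d)⁻¹ * ((if (b : ℤ) ∣ t then 1 else 0) - (b : ℂ)⁻¹) := by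
  have hζ : IsPrimitiveRoot (xi b) b := Complex.isPrimitiveRoot_exp b (by omega)
  have hinner : ∀ j ∈ Ico 1 b,
      ∑ m ∈ coprimeResidues b, (1 - xi b ^ (j * m))⁻¹ = (b.totient : ℂ) / 2 := by
    intro j hj
    rw [mem_Ico] at hj
    rw [eq_div_iff two_ne_zero, mul_comm,
      hζ.two_mul_sum_coprimeResidues_inv_one_sub_pow (Nat.not_dvd_of_pos_of_lt hj.1 hj.2)]
  have hgeom : ∑ j ∈ Ico 1 b, xi b ^ ((j : ℤ) * t) = (if (b : ℤ) ∣ t then (b : ℂ) else 0) - 1 := by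
    rw [← hζ.sum_range_zpow_mul t, sum_range_eq_add_Ico _ (by omega)]
    simp
  have hφ : (b.totient : ℂ) ≠ 0 := by exact_mod_cast (Nat.totient_pos.mpr (by omega)).ne'
  have hb0 : (b : ℂ) ≠ 0 := by exact_mod_cast (by omega : b ≠ 0)
  rw [sum_piFinset_FDS_univ,
    sum_congr rfl fun j hj => by rw [hinner j hj, prod_const, card_univ, Fintype.card_fin],
    ← sum_mul, hgeom, div_pow, inv_pow]
  split_ifs
  · field_simp
  · field_simp
    ring

/-- The full average of the `d`-dimensional Fourier–Dedekind sums equals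
`(1/2^d)(𝟙[b ∣ t] − 1/b)`. -/
theorem stmt10 (d b : ℕ) (hd : 1 ≤ d) (hb : 3 ≤ b) (t : ℤ) :
    ((Nat.totient b : ℂ))⁻¹ ^ d *
        ∑ m ∈ Fintype.piFinset
            (fun _ : Fin d => (Finset.Ico 1 b).filter (fun m => Nat.gcd m b = 1)),
          FDS b m Finset.univ t =
      ((2 : ℂ) ^ d)⁻¹ * ((if (b : ℤ) ∣ t then 1 else 0) - (b : ℂ)⁻¹) :=
  stmt10_general d b hb t
end

section
/- Let a₁, a₂, b be positive integers with gcd(a₁,b) = gcd(a₂,b) = 1 and define S̃_{(a₁,a₂;b)}(t) := ∑_{1≤k₁,k₂≤b−1, a₁k₁+a₂k₂≡−t (mod b)} k₁k₂. Then S̃_{(a₁,a₂;b)}(t) ≡ −a₂^{−1}·t·(b−1)b/2 − a₂^{−1}·a₁·(b−1)b(2b−1)/6 (mod b). -/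
lemma sum1' (n : ℕ) : 2 * ∑ k ∈ Finset.range n, (k:ℤ) = ((n:ℤ)-1)*n := by
  induction n with
  | zero => simp
  | succ n ih => rw [Finset.sum_range_succ, mul_add, ih]; push_cast; ring

lemma sum2' (n : ℕ) : 6 * ∑ k ∈ Finset.range n, (k:ℤ)^2 = ((n:ℤ)-1)*n*(2*n-1) := by
  induction n with
  | zero => simp
  | succ n ih => rw [Finset.sum_range_succ, mul_add, ih]; push_cast; ring

/-- The reduced 2-dimensional Fourier–Dedekind sum. -/
def redS (a₁ a₂ b : ℕ) (t : ℤ) : ℤ :=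
  ∑ p ∈ ((Finset.Ico 1 b) ×ˢ (Finset.Ico 1 b)).filter
      (fun p => (b : ℤ) ∣ (a₁ : ℤ) * p.1 + (a₂ : ℤ) * p.2 + t),
    (p.1 : ℤ) * (p.2 : ℤ)

/-- `S̃_{(a₁,a₂;b)}(t) ≡ −a₂⁻¹ t (b−1)b/2 − a₂⁻¹ a₁ (b−1)b(2b−1)/6 (mod b)`. -/
theorem stmt12 (a₁ a₂ b : ℕ) (ha₁ : 0 < a₁) (ha₂ : 0 < a₂) (hb : 0 < b)
    (h₁ : Nat.Coprime a₁ b) (h₂ : Nat.Coprime a₂ b) (t : ℤ)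
    (a₂inv : ℤ) (hinv : (b : ℤ) ∣ (a₂ : ℤ) * a₂inv - 1) :
    redS a₁ a₂ b t ≡
      -a₂inv * t * (((b : ℤ) - 1) * b / 2) -
        a₂inv * (a₁ : ℤ) * (((b : ℤ) - 1) * b * (2 * b - 1) / 6) [ZMOD (b : ℤ)] := by
  haveI : NeZero b := ⟨hb.ne'⟩
  rw [show (((b : ℤ) - 1) * b / 2) = ∑ k ∈ Finset.range b, (k:ℤ) by
        rw [← sum1' b, Int.mul_ediv_cancel_left _ two_ne_zero],
      show (((b : ℤ) - 1) * b * (2*b-1) / 6) = ∑ k ∈ Finset.range b, (k:ℤ)^2 by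
        rw [← sum2' b, Int.mul_ediv_cancel_left _ (by norm_num)]]
  rw [← ZMod.intCast_eq_intCast_iff]
  -- the unit fact
  have hu : (a₂ : ZMod b) * (a₂inv : ZMod b) = 1 := by
    have := (ZMod.intCast_zmod_eq_zero_iff_dvd _ b).mpr hinv
    push_cast at this
    linear_combination this
  -- extend ranges
  have hext : redS a₁ a₂ b t =
      ∑ k₁ ∈ Finset.range b, ∑ k₂ ∈ Finset.range b,
        (if (b : ℤ) ∣ (a₁ : ℤ) * k₁ + (a₂ : ℤ) * k₂ + t then (k₁:ℤ) * k₂ else 0) := by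
    unfold redS
    rw [Finset.sum_filter, Finset.sum_product]
    rw [Finset.sum_subset (by intro x hx; simp at *; omega :
        Finset.Ico 1 b ⊆ Finset.range b)]
    · apply Finset.sum_congr rfl
      intro k₁ _
      apply Finset.sum_subset (by intro x hx; simp at *; omega :
        Finset.Ico 1 b ⊆ Finset.range b)
      intro k₂ hk₂ hk₂'
      have : k₂ = 0 := by simp at hk₂ hk₂'; omega
      simp [this]
    · intro k₁ hk₁ hk₁'
      have : k₁ = 0 := by simp at hk₁ hk₁'; omega
      simp [this]
  rw [hext]
  push_cast [apply_ite (Int.cast : ℤ → ZMod b)]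
  -- condition equivalence
  have hcond : ∀ k₁ k₂ : ℕ, ((b:ℤ) ∣ (a₁:ℤ)*k₁+(a₂:ℤ)*k₂+t ↔
      (k₂ : ZMod b) = -(a₂inv : ZMod b) * ((a₁:ZMod b)*(k₁:ZMod b) + (t:ZMod b))) := by
    intro k₁ k₂
    rw [← ZMod.intCast_zmod_eq_zero_iff_dvd]
    push_cast
    constructor
    · intro h
      linear_combination (a₂inv : ZMod b) * h - (k₂ : ZMod b) * hu
    · intro h
      linear_combination (a₂ : ZMod b) * h -
        ((a₁:ZMod b)*(k₁:ZMod b)+(t:ZMod b)) * hu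
  -- inner sum
  have hinner : ∀ k₁ : ℕ,
      (∑ k₂ ∈ Finset.range b,
        (if (b:ℤ) ∣ (a₁:ℤ)*k₁+(a₂:ℤ)*k₂+t then (k₁:ZMod b) * (k₂:ZMod b) else 0)) =
      (k₁:ZMod b) * (-(a₂inv : ZMod b) * ((a₁:ZMod b)*(k₁:ZMod b) + (t:ZMod b))) := by
    intro k₁
    set w : ZMod b := -(a₂inv : ZMod b) * ((a₁:ZMod b)*(k₁:ZMod b) + (t:ZMod b)) with hw
    have hstep : ∀ k₂ ∈ Finset.range b,
        (if (b:ℤ) ∣ (a₁:ℤ)*k₁+(a₂:ℤ)*k₂+t then (k₁:ZMod b) * (k₂:ZMod b) else 0) =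
        (if (k₂ : ZMod b) = w then (k₁:ZMod b) * w else 0) := by
      intro k₂ _
      by_cases h : (k₂ : ZMod b) = w
      · rw [if_pos ((hcond k₁ k₂).mpr h), if_pos h, h]
      · rw [if_neg (fun hc => h ((hcond k₁ k₂).mp hc)), if_neg h]
    rw [Finset.sum_congr rfl hstep, Finset.sum_eq_single w.val]
    · simp [ZMod.natCast_val, ZMod.cast_id]
    · intro k₂ hk₂ hne
      rw [if_neg]
      intro hc
      exact hne (by rw [← ZMod.val_cast_of_lt (Finset.mem_range.mp hk₂), hc])
    · intro h
      exact absurd (Finset.mem_range.mpr (ZMod.val_lt w)) h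
  rw [Finset.sum_congr rfl (fun k₁ _ => hinner k₁)]
  rw [Finset.mul_sum, Finset.mul_sum, ← Finset.sum_sub_distrib]
  apply Finset.sum_congr rfl
  intro k _
  ring
end

section
/- Let a, b be coprime positive integers with b ≥ 2, and let s(a,b) = ∑_{k=1}^{b−1} ((k/b))((ka/b)) be the classical Dedekind sum, where ((x)) = x − ⌊x⌋ − 1/2 for x ∉ ℤ and ((x)) = 0 for x ∈ ℤ. Then −(b−1)(b−2)/(12b) ≤ s(a,b) ≤ (b−1)(b−2)/(12b). Moreover, the upper bound holds if and only if a ≡ 1 (mod b), and the lower bound holds if and only if a ≡ −1 (mod b). -/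
/-- The sawtooth function `((x))`. -/
def saw (x : ℚ) : ℚ := if x.den = 1 then 0 else x - ⌊x⌋ - 1 / 2

/-- The classical Dedekind sum `s(a,b) = ∑_{k=1}^{b−1} ((k/b))((ka/b))`. -/
def dedekindSum (a b : ℕ) : ℚ :=
  ∑ k ∈ Finset.Ico 1 b, saw ((k : ℚ) / b) * saw ((k * a : ℚ) / b)

/-! With `x k = k / b - 1 / 2`, the terms of `s(a, b)` are `x k * x (k a mod b)` for
`0 < k < b`. Multiplication by `a` permutes the nonzero residues mod `b`, so both factors have the
same sum of squares `S = (b - 1)(b - 2) / (12 b)`, and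
`2 (S ∓ s(a, b)) = ∑ (x k ∓ x (k a mod b))² ≥ 0`. Equality forces `k a ≡ ± k (mod b)` for every
`k`, i.e. `a ≡ ± 1 (mod b)`. -/

open Finset

section SumOfProducts

variable {ι R : Type*} [CommRing R] {s : Finset ι} {f g : ι → R}

lemma two_mul_sum_mul_of_sum_sq_eq (h : ∑ i ∈ s, g i ^ 2 = ∑ i ∈ s, f i ^ 2) :
    2 * ∑ i ∈ s, f i * g i = 2 * ∑ i ∈ s, f i ^ 2 - ∑ i ∈ s, (f i - g i) ^ 2 := by
  simp only [sub_sq, sum_add_distrib, sum_sub_distrib, h, mul_assoc, ← mul_sum]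
  ring

variable [LinearOrder R] [IsStrictOrderedRing R]

lemma sum_mul_le_of_sum_sq_eq (h : ∑ i ∈ s, g i ^ 2 = ∑ i ∈ s, f i ^ 2) :
    ∑ i ∈ s, f i * g i ≤ ∑ i ∈ s, f i ^ 2 := by
  have hid := two_mul_sum_mul_of_sum_sq_eq h
  have hnonneg : 0 ≤ ∑ i ∈ s, (f i - g i) ^ 2 := sum_nonneg fun i _ ↦ sq_nonneg _
  linarith

lemma sum_mul_eq_sum_sq_iff (h : ∑ i ∈ s, g i ^ 2 = ∑ i ∈ s, f i ^ 2) :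
    ∑ i ∈ s, f i * g i = ∑ i ∈ s, f i ^ 2 ↔ ∀ i ∈ s, g i = f i := by
  have hid := two_mul_sum_mul_of_sum_sq_eq h
  calc ∑ i ∈ s, f i * g i = ∑ i ∈ s, f i ^ 2 ↔ ∑ i ∈ s, (f i - g i) ^ 2 = 0 := by
        constructor <;> intro h' <;> linarith
    _ ↔ ∀ i ∈ s, g i = f i := by
        rw [sum_eq_zero_iff_of_nonneg fun i _ ↦ sq_nonneg _]
        exact forall₂_congr fun i _ ↦ by rw [sq_eq_zero_iff, sub_eq_zero, eq_comm]

end SumOfProducts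

lemma sum_range_natCast_sub_sq {K : Type*} [Field K] [CharZero K] (n : ℕ) (c : K) :
    ∑ k ∈ range n, ((k : K) - c) ^ 2 =
      n * (n - 1) * (2 * n - 1) / 6 - c * n * (n - 1) + n * c ^ 2 := by
  induction n with
  | zero => simp
  | succ n ih => rw [sum_range_succ, ih]; push_cast; ring

lemma sum_Ico_div_sub_half_sq (b : ℕ) (hb : 0 < b) :
    ∑ k ∈ Ico 1 b, ((k : ℚ) / b - 1 / 2) ^ 2 = ((b : ℚ) - 1) * (b - 2) / (12 * b) := by
  have hb' : (b : ℚ) ≠ 0 := by positivity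
  have hrange : ∑ k ∈ range b, ((k : ℚ) / b - 1 / 2) ^ 2
      = (∑ k ∈ range b, ((k : ℚ) - b / 2) ^ 2) / (b : ℚ) ^ 2 := by
    rw [sum_div]
    refine sum_congr rfl fun k _ ↦ ?_
    field_simp
  rw [sum_Ico_eq_sub _ hb, hrange, sum_range_natCast_sub_sq, sum_range_one]
  field_simp
  ring

lemma saw_natCast_div {m b : ℕ} (hb : b ≠ 0) (hmb : ¬ b ∣ m) :
    saw ((m : ℚ) / b) = ((m % b : ℕ) : ℚ) / b - 1 / 2 := by
  rw [saw, if_neg (by rwa [Rat.den_div_natCast_eq_one_iff _ _ hb]), Int.self_sub_floor,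
    Int.fract_div_natCast_eq_div_natCast_mod]

lemma mul_mod_mem_Ico {a b k : ℕ} (h : a.Coprime b) (hk : k ∈ Ico 1 b) :
    k * a % b ∈ Ico 1 b := by
  rw [mem_Ico] at hk ⊢
  refine ⟨Nat.pos_of_ne_zero fun h0 ↦ ?_, Nat.mod_lt _ (by omega)⟩
  have : b ∣ k := h.symm.dvd_of_dvd_mul_right (Nat.dvd_of_mod_eq_zero h0)
  exact absurd (Nat.le_of_dvd (by omega) this) (by omega)

lemma sum_Ico_comp_mul_mod {M : Type*} [AddCommMonoid M] {a b : ℕ} (h : a.Coprime b)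
    (φ : ℕ → M) : ∑ k ∈ Ico 1 b, φ (k * a % b) = ∑ k ∈ Ico 1 b, φ k := by
  have hinj : Set.InjOn (fun k ↦ k * a % b) (Ico 1 b : Set ℕ) := by
    intro x hx y hy hxy
    simp only [coe_Ico, Set.mem_Ico] at hx hy
    exact (Nat.ModEq.cancel_right_of_coprime h.symm hxy).eq_of_lt_of_lt hx.2 hy.2
  have hmaps : Set.MapsTo (fun k ↦ k * a % b) (Ico 1 b : Set ℕ) (Ico 1 b) :=
    fun k hk ↦ mul_mod_mem_Ico h hk
  exact sum_nbij _ hmaps hinj (surjOn_of_injOn_of_card_le _ hmaps hinj le_rfl) fun _ _ ↦ rfl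

lemma dedekindSum_eq_sum_Ico {a b : ℕ} (h : a.Coprime b) :
    dedekindSum a b =
      ∑ k ∈ Ico 1 b, ((k : ℚ) / b - 1 / 2) * (((k * a % b : ℕ) : ℚ) / b - 1 / 2) := by
  refine sum_congr rfl fun k hk ↦ ?_
  have hka := mem_Ico.1 (mul_mod_mem_Ico h hk)
  rw [mem_Ico] at hk
  have hb : b ≠ 0 := by omega
  rw [saw_natCast_div hb (Nat.not_dvd_of_pos_of_lt hk.1 hk.2), Nat.mod_eq_of_lt hk.2,
    ← Nat.cast_mul, saw_natCast_div hb fun hd ↦ by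
      have := Nat.mod_eq_zero_of_dvd hd; omega]

lemma mul_mod_eq_self_iff {a b : ℕ} (hb : 2 ≤ b) :
    (∀ k ∈ Ico 1 b, k * a % b = k) ↔ a ≡ 1 [MOD b] := by
  constructor
  · intro hall
    simpa [Nat.ModEq, Nat.mod_eq_of_lt (by omega : 1 < b)] using
      hall 1 (mem_Ico.2 ⟨le_rfl, by omega⟩)
  · intro ha k hk
    have := ha.mul_left k
    rwa [mul_one, Nat.ModEq, Nat.mod_eq_of_lt (mem_Ico.1 hk).2] at this

lemma mul_mod_add_self_eq_iff {a b : ℕ} (hb : 2 ≤ b) :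
    (∀ k ∈ Ico 1 b, k * a % b + k = b) ↔ b ∣ a + 1 := by
  constructor
  · intro hall
    have := hall 1 (mem_Ico.2 ⟨le_rfl, by omega⟩)
    rw [one_mul] at this
    rw [Nat.dvd_iff_mod_eq_zero, ← Nat.mod_add_mod, this, Nat.mod_self]
  · intro ha k hk
    rw [mem_Ico] at hk
    have := Nat.mod_lt (k * a) (by omega : 0 < b)
    refine Nat.eq_of_dvd_of_lt_two_mul (by omega) ?_ (by omega)
    rw [Nat.dvd_iff_mod_eq_zero, Nat.mod_add_mod, ← Nat.dvd_iff_mod_eq_zero]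
    simpa [mul_add] using ha.mul_left k

lemma natCast_div_sub_half_eq_iff {b j k : ℕ} (hb : b ≠ 0) :
    (j : ℚ) / b - 1 / 2 = (k : ℚ) / b - 1 / 2 ↔ j = k := by
  rw [sub_left_inj, div_left_inj' (by exact_mod_cast hb), Nat.cast_inj]

lemma neg_natCast_div_sub_half_eq_iff {b j k : ℕ} (hb : b ≠ 0) :
    -((j : ℚ) / b - 1 / 2) = (k : ℚ) / b - 1 / 2 ↔ j + k = b := by
  have hb' : (b : ℚ) ≠ 0 := by exact_mod_cast hb
  rw [← @Nat.cast_inj ℚ]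
  push_cast
  constructor <;> intro h
  · field_simp at h; linarith
  · field_simp; linarith

theorem stmt15_general (a b : ℕ) (hb : 2 ≤ b) (h : Nat.Coprime a b) :
    (-(((b : ℚ) - 1) * (b - 2) / (12 * b)) ≤ dedekindSum a b ∧
      dedekindSum a b ≤ ((b : ℚ) - 1) * (b - 2) / (12 * b)) ∧
    (dedekindSum a b = ((b : ℚ) - 1) * (b - 2) / (12 * b) ↔ a ≡ 1 [MOD b]) ∧
    (dedekindSum a b = -(((b : ℚ) - 1) * (b - 2) / (12 * b)) ↔ (b : ℤ) ∣ (a : ℤ) + 1) := by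
  set f : ℕ → ℚ := fun j ↦ (j : ℚ) / b - 1 / 2
  have hb0 : b ≠ 0 := by omega
  have hS : ∑ k ∈ Ico 1 b, f k ^ 2 = ((b : ℚ) - 1) * (b - 2) / (12 * b) :=
    sum_Ico_div_sub_half_sq b (by omega)
  have hs : dedekindSum a b = ∑ k ∈ Ico 1 b, f k * f (k * a % b) := dedekindSum_eq_sum_Ico h
  have hs' : dedekindSum a b = -∑ k ∈ Ico 1 b, f k * -f (k * a % b) := by simp [hs]
  have hsq : ∑ k ∈ Ico 1 b, f (k * a % b) ^ 2 = ∑ k ∈ Ico 1 b, f k ^ 2 :=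
    sum_Ico_comp_mul_mod h (f · ^ 2)
  have hsq' : ∑ k ∈ Ico 1 b, (-f (k * a % b)) ^ 2 = ∑ k ∈ Ico 1 b, f k ^ 2 := by
    simpa only [neg_sq] using hsq
  rw [← hS]
  refine ⟨⟨?_, ?_⟩, ?_, ?_⟩
  · rw [hs', neg_le_neg_iff]
    exact sum_mul_le_of_sum_sq_eq hsq'
  · rw [hs]
    exact sum_mul_le_of_sum_sq_eq hsq
  · rw [hs, sum_mul_eq_sum_sq_iff hsq, ← mul_mod_eq_self_iff hb]
    exact forall₂_congr fun k _ ↦ natCast_div_sub_half_eq_iff hb0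
  · rw [hs', neg_inj, sum_mul_eq_sum_sq_iff hsq', ← Nat.cast_succ,
      Int.natCast_dvd_natCast, ← mul_mod_add_self_eq_iff hb]
    exact forall₂_congr fun k _ ↦ neg_natCast_div_sub_half_eq_iff hb0

/-- `−(b−1)(b−2)/(12b) ≤ s(a,b) ≤ (b−1)(b−2)/(12b)`, with equality criteria. -/
theorem stmt15 (a b : ℕ) (ha : 0 < a) (hb : 2 ≤ b) (h : Nat.Coprime a b) :
    (-(((b : ℚ) - 1) * (b - 2) / (12 * b)) ≤ dedekindSum a b ∧
      dedekindSum a b ≤ ((b : ℚ) - 1) * (b - 2) / (12 * b)) ∧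
    (dedekindSum a b = ((b : ℚ) - 1) * (b - 2) / (12 * b) ↔ a ≡ 1 [MOD b]) ∧
    (dedekindSum a b = -(((b : ℚ) - 1) * (b - 2) / (12 * b)) ↔ (b : ℤ) ∣ (a : ℤ) + 1) :=
  stmt15_general a b hb h
end
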